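/- arXiv:1702.07930 — 2 statements merged into one kernel-verified Lean document; each statement's English description precedes it below -/
import Mathlib

section
/- (Corollary 2) Assume X⋄ ∩ int C ≠ ∅. Let d ≥ 1 be the dimension of the real subspace Re(R(Ψ)) = {Re(Ψ w) : w ∈ ℂ^{p'}}, and let Ψ = F Z where F is a real p × d matrix of rank d and Z is a complex d × p' matrix whose real d × 2p' matrix [Re Z Im Z] has rank d; set F⁺ = (Fᵀ F)⁻¹ Fᵀ and Z^‡ = Z^H (Re(Z Z^H))⁻¹. Then for any x⋄ ∈ X⋄ ∩ int C, U = inf_{t ∈ ℂ^{p'}} ‖t + Z^‡ (F⁺ ∇L(x⋄) − Re(Z t))‖_∞, and in particular U is finite. -/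
open Matrix
open scoped RealInnerProductSpace ENNReal

noncomputable section

def cnorm1 {n : ℕ} (z : Fin n → ℂ) : ℝ := ∑ j, ‖z j‖

noncomputable def cnormInf {n : ℕ} (z : Fin n → ℂ) : ℝ := ⨆ j, ‖z j‖

def psiH {p p' : ℕ} (Ψ : Matrix (Fin p) (Fin p') ℂ) (x : EuclideanSpace ℝ (Fin p)) :
    Fin p' → ℂ :=
  Matrix.mulVec Ψᴴ fun i => (x i : ℂ)

def rePsi {p p' : ℕ} (Ψ : Matrix (Fin p) (Fin p') ℂ) (w : Fin p' → ℂ) :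
    EuclideanSpace ℝ (Fin p) :=
  WithLp.toLp 2 (fun i => (Matrix.mulVec Ψ w i).re)

def Gset {n : ℕ} (s : Fin n → ℂ) : Set (Fin n → ℂ) :=
  {w | ∀ j, ‖w j‖ ≤ 1 ∧ (s j ≠ 0 → w j = s j / ((‖s j‖ : ℝ) : ℂ))}

def normalCone {p : ℕ} (C : Set (EuclideanSpace ℝ (Fin p))) (x : EuclideanSpace ℝ (Fin p)) :
    Set (EuclideanSpace ℝ (Fin p)) :=
  {a | ∀ y ∈ C, ⟪a, y - x⟫ ≤ 0}

def XuSet {p p' : ℕ} (C : Set (EuclideanSpace ℝ (Fin p))) (L : EuclideanSpace ℝ (Fin p) → ℝ)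
    (Ψ : Matrix (Fin p) (Fin p') ℂ) (u : ℝ) : Set (EuclideanSpace ℝ (Fin p)) :=
  {x ∈ C | ∀ χ ∈ C, L x + u * cnorm1 (psiH Ψ x) ≤ L χ + u * cnorm1 (psiH Ψ χ)}

def QSet {p p' : ℕ} (C : Set (EuclideanSpace ℝ (Fin p))) (Ψ : Matrix (Fin p) (Fin p') ℂ) :
    Set (EuclideanSpace ℝ (Fin p)) :=
  {x ∈ C | ∀ χ ∈ C, cnorm1 (psiH Ψ x) ≤ cnorm1 (psiH Ψ χ)}

def XdSet {p p' : ℕ} (C : Set (EuclideanSpace ℝ (Fin p))) (L : EuclideanSpace ℝ (Fin p) → ℝ)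
    (Ψ : Matrix (Fin p) (Fin p') ℂ) : Set (EuclideanSpace ℝ (Fin p)) :=
  {x ∈ QSet C Ψ | ∀ χ ∈ QSet C Ψ, L x ≤ L χ}

def Ubound {p p' : ℕ} (C : Set (EuclideanSpace ℝ (Fin p))) (L : EuclideanSpace ℝ (Fin p) → ℝ)
    (Ψ : Matrix (Fin p) (Fin p') ℂ) : ℝ≥0∞ :=
  sInf (ENNReal.ofReal '' {u : ℝ | 0 ≤ u ∧ (XuSet C L Ψ u ∩ QSet C Ψ).Nonempty})


/-- `F⁺ = (Fᵀ F)⁻¹ Fᵀ`, the Moore–Penrose inverse of a full-column-rank real matrix. -/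
def Fpinv {p d : ℕ} (F : Matrix (Fin p) (Fin d) ℝ) : Matrix (Fin d) (Fin p) ℝ :=
  (Fᵀ * F)⁻¹ * Fᵀ

/-- `Z^‡ = Zᴴ (Re (Z Zᴴ))⁻¹`. -/
def Zddag {d p' : ℕ} (Z : Matrix (Fin d) (Fin p') ℂ) : Matrix (Fin p') (Fin d) ℂ :=
  Zᴴ * (((Z * Zᴴ).map Complex.re)⁻¹.map Complex.ofReal)

/-!
Let `xd ∈ X⋄ ∩ int C` and `g = ∇L xd`. Pushing `xd` slightly towards `0` inside `C` shows
`Ψᴴ xd = 0`, so `Q = {x ∈ C | Ψᴴ x = 0}` and `X_u ∩ Q ≠ ∅` exactly when `xd ∈ X_u`. By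
first-order optimality at the interior point `xd` (and the gradient inequality of the convex `L`
for the converse) this holds iff `⟪g, v⟫ ≤ u ‖Ψᴴ v‖₁` for all `v`, and by Hahn–Banach duality
between `‖·‖₁` and `‖·‖∞` iff `g = Re (Ψ w)` for some `w` with `‖w‖∞ ≤ u`. Optimality of `xd`
along `ker Ψᴴ ⊇ ker Fᵀ` puts `g` in the range of `F`, so for `Ψ = F Z` the last condition reads
`Re (Z w) = F⁺ g`, whose solutions are exactly the vectors `t + Z‡ (F⁺ g - Re (Z t))`.
-/

open Filter Topology

section Norms

variable {n : ℕ}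

lemma cnormInf_eq_norm (z : Fin n → ℂ) : cnormInf z = ‖z‖ :=
  le_antisymm (Real.iSup_le (fun j => norm_le_pi_norm z j) (norm_nonneg z))
    ((pi_norm_le_iff_of_nonneg (Real.iSup_nonneg fun j => norm_nonneg (z j))).2
      fun j => le_ciSup (f := fun j => ‖z j‖) (Set.finite_range _).bddAbove j)

lemma cnorm1_nonneg (z : Fin n → ℂ) : 0 ≤ cnorm1 z :=
  Finset.sum_nonneg fun j _ => norm_nonneg (z j)

lemma cnorm1_eq_zero {z : Fin n → ℂ} : cnorm1 z = 0 ↔ z = 0 := by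
  simp [cnorm1, Finset.sum_eq_zero_iff_of_nonneg, funext_iff]

lemma cnorm1_zero : cnorm1 (0 : Fin n → ℂ) = 0 :=
  cnorm1_eq_zero.2 rfl

lemma cnorm1_smul (r : ℝ) (z : Fin n → ℂ) : cnorm1 (r • z) = |r| * cnorm1 z := by
  simp [cnorm1, Finset.mul_sum]

lemma cnorm1_neg (z : Fin n → ℂ) : cnorm1 (-z) = cnorm1 z := by
  simp [cnorm1]

end Norms

section Linear

variable {p p' : ℕ} (Ψ : Matrix (Fin p) (Fin p') ℂ)

def psiHₗ : EuclideanSpace ℝ (Fin p) →ₗ[ℝ] Fin p' → ℂ where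
  toFun := psiH Ψ
  map_add' x y := by
    simp only [psiH, PiLp.add_apply, Complex.ofReal_add, ← mulVec_add]
    rfl
  map_smul' r x := by
    simp only [psiH, PiLp.smul_apply, smul_eq_mul, Complex.ofReal_mul, RingHom.id_apply]
    exact mulVec_smul Ψᴴ (r : ℂ) _

lemma psiH_add (x y : EuclideanSpace ℝ (Fin p)) : psiH Ψ (x + y) = psiH Ψ x + psiH Ψ y :=
  map_add (psiHₗ Ψ) x y

lemma psiH_sub (x y : EuclideanSpace ℝ (Fin p)) : psiH Ψ (x - y) = psiH Ψ x - psiH Ψ y :=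
  map_sub (psiHₗ Ψ) x y

lemma psiH_neg (x : EuclideanSpace ℝ (Fin p)) : psiH Ψ (-x) = -psiH Ψ x :=
  map_neg (psiHₗ Ψ) x

lemma psiH_smul (r : ℝ) (x : EuclideanSpace ℝ (Fin p)) : psiH Ψ (r • x) = r • psiH Ψ x :=
  map_smul (psiHₗ Ψ) r x

def rePsiₗ : (Fin p' → ℂ) →ₗ[ℝ] EuclideanSpace ℝ (Fin p) where
  toFun := rePsi Ψ
  map_add' w w' := by ext i; simp [rePsi, mulVec_add]
  map_smul' r w := by ext i; simp [rePsi, mulVec_smul]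

lemma inner_rePsi (w : Fin p' → ℂ) (v : EuclideanSpace ℝ (Fin p)) :
    ⟪rePsi Ψ w, v⟫ = (w ⬝ᵥ star (psiH Ψ v)).re := by
  rw [psiH, star_mulVec, conjTranspose_conjTranspose, dotProduct_comm, ← dotProduct_mulVec]
  simp [rePsi, PiLp.inner_apply, dotProduct, Complex.re_sum, mul_comm]

end Linear

section Duality

variable {p p' : ℕ} (Ψ : Matrix (Fin p) (Fin p') ℂ)

lemma inner_rePsi_le (w : Fin p' → ℂ) (v : EuclideanSpace ℝ (Fin p)) :
    ⟪rePsi Ψ w, v⟫ ≤ ‖w‖ * cnorm1 (psiH Ψ v) := by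
  rw [inner_rePsi, cnorm1, Finset.mul_sum]
  calc (w ⬝ᵥ star (psiH Ψ v)).re ≤ ‖w ⬝ᵥ star (psiH Ψ v)‖ := Complex.re_le_norm _
    _ ≤ ∑ j, ‖w j * star (psiH Ψ v j)‖ := norm_sum_le _ _
    _ ≤ ∑ j, ‖w‖ * ‖psiH Ψ v j‖ := Finset.sum_le_sum fun j _ => by
        rw [norm_mul, norm_star]
        exact mul_le_mul_of_nonneg_right (norm_le_pi_norm w j) (norm_nonneg _)

lemma exists_norm_le_inner_rePsi_eq {u : ℝ} (hu : 0 ≤ u) (v : EuclideanSpace ℝ (Fin p)) :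
    ∃ w : Fin p' → ℂ, ‖w‖ ≤ u ∧ ⟪rePsi Ψ w, v⟫ = u * cnorm1 (psiH Ψ v) := by
  set s := psiH Ψ v
  -- `s j / ‖s j‖` is the phase of `s j`, and `0` when `s j = 0`
  refine ⟨fun j => u * (s j / ‖s j‖), (pi_norm_le_iff_of_nonneg hu).2 fun j => ?_, ?_⟩
  · rcases eq_or_ne (s j) 0 with h | h
    · simp [h, hu]
    · simp [h, abs_of_nonneg hu]
  · rw [inner_rePsi, cnorm1, Finset.mul_sum, dotProduct, Complex.re_sum]
    refine Finset.sum_congr rfl fun j _ => ?_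
    rcases eq_or_ne (s j) 0 with h | h
    · simp [h]
    · have hs : (‖s j‖ : ℂ) ≠ 0 := by simpa using h
      change (u * (s j / ‖s j‖) * star (s j)).re = u * ‖s j‖
      rw [mul_assoc, div_mul_eq_mul_div, Complex.star_def, Complex.mul_conj']
      field_simp
      norm_cast

lemma exists_rePsi_eq_of_inner_le {g : EuclideanSpace ℝ (Fin p)} {u : ℝ} (hu : 0 ≤ u)
    (h : ∀ v, ⟪g, v⟫ ≤ u * cnorm1 (psiH Ψ v)) : ∃ w, rePsi Ψ w = g ∧ ‖w‖ ≤ u := by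
  -- otherwise some `⟪v, ·⟫` strictly separates `g` from the compact convex image of the ball
  -- `‖w‖ ≤ u`, and the maximiser of `exists_norm_le_inner_rePsi_eq` for `v` contradicts `h v`
  by_contra! hg
  have hgA : g ∉ rePsiₗ Ψ '' Metric.closedBall 0 u := by
    rintro ⟨w, hw, rfl⟩
    exact (hg w rfl).not_ge (mem_closedBall_zero_iff.1 hw)
  obtain ⟨f, c, hfA, hfg⟩ := geometric_hahn_banach_closed_point
    ((convex_closedBall 0 u).linear_image _)
    ((isCompact_closedBall 0 u).image (rePsiₗ Ψ).continuous_of_finiteDimensional).isClosed hgA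
  set v := (InnerProductSpace.toDual ℝ _).symm f
  have hf : ∀ y, f y = ⟪v, y⟫ := fun y => by simp [v]
  obtain ⟨w, hw, hwv⟩ := exists_norm_le_inner_rePsi_eq Ψ hu v
  have hfw : ⟪v, rePsi Ψ w⟫ < c :=
    (hf _).symm.trans_lt (hfA _ ⟨w, mem_closedBall_zero_iff.2 hw, rfl⟩)
  rw [hf, real_inner_comm] at hfg
  rw [real_inner_comm] at hfw
  linarith [h v]

lemma exists_rePsi_eq_norm_le_iff {g : EuclideanSpace ℝ (Fin p)} {u : ℝ} (hu : 0 ≤ u) :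
    (∃ w, rePsi Ψ w = g ∧ ‖w‖ ≤ u) ↔ ∀ v, ⟪g, v⟫ ≤ u * cnorm1 (psiH Ψ v) :=
  ⟨fun ⟨w, hw, hwu⟩ v => hw ▸ (inner_rePsi_le Ψ w v).trans
    (mul_le_mul_of_nonneg_right hwu (cnorm1_nonneg _)), exists_rePsi_eq_of_inner_le Ψ hu⟩

end Duality

lemma eventually_add_smul_mem_of_mem_interior {E : Type*} [AddCommGroup E] [Module ℝ E]
    [TopologicalSpace E] [ContinuousAdd E] [ContinuousSMul ℝ E] {s : Set E} {x : E}
    (hx : x ∈ interior s) (v : E) : ∀ᶠ ε in 𝓝[>] (0 : ℝ), x + ε • v ∈ s := by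
  have hcont : Continuous fun ε : ℝ => x + ε • v := by fun_prop
  have := hcont.tendsto 0
  rw [zero_smul, add_zero] at this
  exact eventually_nhdsWithin_of_eventually_nhds (this (mem_interior_iff_mem_nhds.1 hx))

section FirstOrder

variable {E : Type*} [NormedAddCommGroup E] [InnerProductSpace ℝ E] [CompleteSpace E]

lemma HasDerivAt.nonneg_of_eventually_ge {φ : ℝ → ℝ} {D a : ℝ} (h : HasDerivAt φ D a)
    (hmin : ∀ᶠ x in 𝓝[>] a, φ a ≤ φ x) : 0 ≤ D := by
  refine ge_of_tendsto ((hasDerivAt_iff_tendsto_slope.mp h).mono_left (nhdsGT_le_nhdsNE a)) ?_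
  filter_upwards [hmin, self_mem_nhdsWithin] with x hx hax
  rw [slope_def_field]
  exact div_nonneg (sub_nonneg.2 hx) (sub_nonneg.2 (le_of_lt hax))

lemma HasGradientAt.hasDerivAt_add_smul {L : E → ℝ} {g x : E} (hg : HasGradientAt L g x)
    (v : E) : HasDerivAt (fun ε : ℝ => L (x + ε • v)) ⟪g, v⟫ 0 := by
  have hline : HasDerivAt (fun ε : ℝ => x + ε • v) v 0 := by
    simpa using ((hasDerivAt_id (0 : ℝ)).smul_const v).const_add x
  have hL : HasFDerivAt L (InnerProductSpace.toDual ℝ E g) (x + (0 : ℝ) • v) := by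
    simpa using hasGradientAt_iff_hasFDerivAt.mp hg
  exact hL.comp_hasDerivAt (0 : ℝ) hline

lemma HasGradientAt.neg_le_inner {L : E → ℝ} {g x v : E} {c : ℝ} (hg : HasGradientAt L g x)
    (h : ∀ᶠ ε in 𝓝[>] (0 : ℝ), L x ≤ L (x + ε • v) + ε * c) : -c ≤ ⟪g, v⟫ := by
  have := ((hg.hasDerivAt_add_smul v).add ((hasDerivAt_id (0 : ℝ)).mul_const c))
    |>.nonneg_of_eventually_ge (by simpa using h)
  simp only [one_mul] at this
  linarith

lemma ConvexOn.add_inner_gradient_le {L : E → ℝ} (hL : ConvexOn ℝ Set.univ L) {g x : E}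
    (hg : HasGradientAt L g x) (y : E) : L x + ⟪g, y - x⟫ ≤ L y := by
  have hline : ConvexOn ℝ Set.univ (fun ε : ℝ => L (x + ε • (y - x))) := by
    simpa [Function.comp_def, AffineMap.lineMap_apply_module', add_comm] using
      hL.comp_affineMap (AffineMap.lineMap x y)
  have := hline.le_slope_of_hasDerivAt (Set.mem_univ 0) (Set.mem_univ 1) one_pos
    (hg.hasDerivAt_add_smul (y - x))
  simp [slope_def_field] at this
  linarith

end FirstOrder

namespace Matrix

variable {m n : Type*} [Fintype n]

lemma isUnit_of_rank_eq_card {K : Type*} [Field K] [DecidableEq n] {A : Matrix n n K}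
    (h : A.rank = Fintype.card n) : IsUnit A := by
  rw [← mulVec_surjective_iff_isUnit, ← coe_mulVecLin, ← LinearMap.range_eq_top]
  apply Submodule.eq_top_of_finrank_eq
  rw [← rank, h, Module.finrank_fintype_fun_eq_card]

lemma re_mulVec_ofReal (A : Matrix m n ℂ) (y : n → ℝ) (i : m) :
    ((A *ᵥ fun j => (y j : ℂ)) i).re = (A.map Complex.re *ᵥ y) i := by
  simp [mulVec, dotProduct, Complex.re_sum]

lemma re_map_ofReal_mulVec (B : Matrix m n ℝ) (c : n → ℂ) (i : m) :
    ((B.map Complex.ofReal *ᵥ c) i).re = (B *ᵥ fun j => (c j).re) i := by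
  simp [mulVec, dotProduct, Complex.re_sum]

lemma map_ofReal_mulVec_ofReal (B : Matrix m n ℝ) (y : n → ℝ) :
    (B.map Complex.ofReal *ᵥ fun j => (y j : ℂ)) = fun i => ((B *ᵥ y) i : ℂ) := by
  funext i
  exact (RingHom.map_mulVec Complex.ofRealHom B y i).symm

lemma re_mul_conjTranspose (Z : Matrix m n ℂ) :
    (Z * Zᴴ).map Complex.re = fromCols (Z.map Complex.re) (Z.map Complex.im)
      * (fromCols (Z.map Complex.re) (Z.map Complex.im))ᵀ := by
  rw [transpose_fromCols, fromCols_mul_fromRows]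
  ext j k
  simp [mul_apply, Complex.re_sum, ← Finset.sum_add_distrib, Complex.mul_re]

end Matrix

section Factorization

variable {p p' d : ℕ} {F : Matrix (Fin p) (Fin d) ℝ} {Z : Matrix (Fin d) (Fin p') ℂ}

lemma isUnit_transpose_mul_self (hF : F.rank = d) : IsUnit (Fᵀ * F) :=
  isUnit_of_rank_eq_card (by rw [rank_transpose_mul_self, hF, Fintype.card_fin])

lemma Fpinv_mul (hF : F.rank = d) : Fpinv F * F = 1 := by
  rw [Fpinv, Matrix.mul_assoc,
    nonsing_inv_mul _ ((isUnit_iff_isUnit_det _).1 (isUnit_transpose_mul_self hF))]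

lemma transpose_mul_mul_Fpinv (hF : F.rank = d) : Fᵀ * F * Fpinv F = Fᵀ := by
  rw [Fpinv, ← Matrix.mul_assoc,
    mul_nonsing_inv _ ((isUnit_iff_isUnit_det _).1 (isUnit_transpose_mul_self hF)),
    Matrix.one_mul]

lemma mulVec_Fpinv_mulVec (hF : F.rank = d) {g : Fin p → ℝ}
    (hg : ∀ v, Fᵀ *ᵥ v = 0 → g ⬝ᵥ v = 0) : F *ᵥ (Fpinv F *ᵥ g) = g := by
  set r := g - F *ᵥ (Fpinv F *ᵥ g)
  have hr : Fᵀ *ᵥ r = 0 := by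
    rw [mulVec_sub, mulVec_mulVec, mulVec_mulVec, transpose_mul_mul_Fpinv hF, sub_self]
  have hrr : r ⬝ᵥ r = 0 := by
    calc r ⬝ᵥ r = g ⬝ᵥ r - (Fpinv F *ᵥ g) ⬝ᵥ (Fᵀ *ᵥ r) := by
          rw [sub_dotProduct, dotProduct_mulVec, vecMul_transpose]
      _ = 0 := by rw [hg r hr, hr, dotProduct_zero, sub_zero]
  exact (sub_eq_zero.1 (dotProduct_self_eq_zero.1 hrr)).symm

def reSolution (Z : Matrix (Fin d) (Fin p') ℂ) (h : Fin d → ℝ) (t : Fin p' → ℂ) : Fin p' → ℂ :=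
  t + (Zddag Z).mulVec fun i => ((h i - (Z.mulVec t i).re : ℝ) : ℂ)

lemma re_mulVec_Zddag (hZ : (fromCols (Z.map Complex.re) (Z.map Complex.im)).rank = d)
    (y : Fin d → ℝ) (k : Fin d) : ((Z *ᵥ (Zddag Z *ᵥ fun j => (y j : ℂ))) k).re = y k := by
  have hdet : IsUnit ((Z * Zᴴ).map Complex.re).det := (isUnit_iff_isUnit_det _).1
    (isUnit_of_rank_eq_card (by
      rw [re_mul_conjTranspose, rank_self_mul_transpose, hZ, Fintype.card_fin]))
  rw [Zddag, mulVec_mulVec, ← Matrix.mul_assoc, ← mulVec_mulVec, map_ofReal_mulVec_ofReal,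
    re_mulVec_ofReal, mulVec_mulVec, mul_nonsing_inv _ hdet, one_mulVec]

lemma re_mulVec_reSolution (hZ : (fromCols (Z.map Complex.re) (Z.map Complex.im)).rank = d)
    (h : Fin d → ℝ) (t : Fin p' → ℂ) (k : Fin d) : ((Z *ᵥ reSolution Z h t) k).re = h k := by
  rw [reSolution, mulVec_add, Pi.add_apply, Complex.add_re, re_mulVec_Zddag hZ]
  ring

lemma reSolution_eq_self {h : Fin d → ℝ} {w : Fin p' → ℂ} (hw : ∀ k, ((Z *ᵥ w) k).re = h k) :
    reSolution Z h w = w := by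
  simp [reSolution, hw, ← Pi.zero_def]

variable {Ψ : Matrix (Fin p) (Fin p') ℂ}

lemma rePsi_eq_of_eq_mul (hfac : Ψ = F.map Complex.ofReal * Z) (w : Fin p' → ℂ) :
    rePsi Ψ w = WithLp.toLp 2 (F *ᵥ fun k => ((Z *ᵥ w) k).re) := by
  ext i
  simp only [rePsi, hfac, ← mulVec_mulVec, re_map_ofReal_mulVec, PiLp.toLp_apply]

lemma psiH_eq_zero_of_eq_mul (hfac : Ψ = F.map Complex.ofReal * Z)
    {v : EuclideanSpace ℝ (Fin p)} (hv : Fᵀ *ᵥ v.ofLp = 0) : psiH Ψ v = 0 := by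
  have hF : (F.map Complex.ofReal)ᴴ = Fᵀ.map Complex.ofReal := by
    ext i j
    simp
  rw [psiH, hfac, conjTranspose_mul, hF, ← mulVec_mulVec, map_ofReal_mulVec_ofReal, hv]
  simp [← Pi.zero_def]

lemma exists_rePsi_eq_iff_exists_reSolution (hfac : Ψ = F.map Complex.ofReal * Z)
    (hF : F.rank = d) (hZ : (fromCols (Z.map Complex.re) (Z.map Complex.im)).rank = d)
    {g : EuclideanSpace ℝ (Fin p)} (hg : ∀ v, psiH Ψ v = 0 → ⟪g, v⟫ = 0) (u : ℝ) :
    (∃ w, rePsi Ψ w = g ∧ ‖w‖ ≤ u) ↔ ∃ t, ‖reSolution Z (Fpinv F *ᵥ g.ofLp) t‖ ≤ u := by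
  have hFg : F *ᵥ (Fpinv F *ᵥ g.ofLp) = g.ofLp := mulVec_Fpinv_mulVec hF fun v hv => by
    simpa [EuclideanSpace.inner_eq_star_dotProduct, dotProduct_comm] using
      hg (WithLp.toLp 2 v) (psiH_eq_zero_of_eq_mul hfac hv)
  have hsol : ∀ w, rePsi Ψ w = g ↔ ∀ k, ((Z *ᵥ w) k).re = (Fpinv F *ᵥ g.ofLp) k := by
    intro w
    rw [rePsi_eq_of_eq_mul hfac, ← funext_iff]
    constructor
    · intro hw
      rw [← hw, WithLp.ofLp_toLp, mulVec_mulVec, Fpinv_mul hF, one_mulVec]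
    · intro hw
      rw [hw, hFg, WithLp.toLp_ofLp]
  constructor
  · rintro ⟨w, hw, hwu⟩
    exact ⟨w, by rwa [reSolution_eq_self ((hsol w).1 hw)]⟩
  · rintro ⟨t, ht⟩
    exact ⟨_, (hsol _).2 (re_mulVec_reSolution hZ _ t), ht⟩

end Factorization

section Optimality

variable {p p' : ℕ} {C : Set (EuclideanSpace ℝ (Fin p))} {L : EuclideanSpace ℝ (Fin p) → ℝ}
  {Ψ : Matrix (Fin p) (Fin p') ℂ} {x xd g : EuclideanSpace ℝ (Fin p)}

lemma psiH_eq_zero_of_mem_QSet_interior (hQ : x ∈ QSet C Ψ) (hx : x ∈ interior C) :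
    psiH Ψ x = 0 := by
  obtain ⟨ε, hεC, hε0, hε1⟩ :=
    ((eventually_add_smul_mem_of_mem_interior hx (-x)).and (Ioo_mem_nhdsGT one_pos)).exists
  have h := hQ.2 _ hεC
  rw [show x + ε • -x = (1 - ε) • x by module, psiH_smul, cnorm1_smul,
    abs_of_pos (by linarith)] at h
  exact cnorm1_eq_zero.1 (le_antisymm (by nlinarith [cnorm1_nonneg (psiH Ψ x)])
    (cnorm1_nonneg _))

lemma mem_QSet_iff_of_psiH_eq_zero {x₀ : EuclideanSpace ℝ (Fin p)} (hx₀ : x₀ ∈ C)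
    (h₀ : psiH Ψ x₀ = 0) : x ∈ QSet C Ψ ↔ x ∈ C ∧ psiH Ψ x = 0 := by
  refine ⟨fun hx => ⟨hx.1, cnorm1_eq_zero.1 (le_antisymm ?_ (cnorm1_nonneg _))⟩,
    fun ⟨hxC, hx⟩ => ⟨hxC, fun χ _ => ?_⟩⟩
  · simpa [h₀, cnorm1] using hx.2 x₀ hx₀
  · simpa [hx, cnorm1] using cnorm1_nonneg (psiH Ψ χ)

lemma inner_gradient_eq_zero_of_psiH_eq_zero (hxd : xd ∈ XdSet C L Ψ ∩ interior C)
    (hg : HasGradientAt L g xd) {v : EuclideanSpace ℝ (Fin p)} (hv : psiH Ψ v = 0) :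
    ⟪g, v⟫ = 0 := by
  have hpsi := psiH_eq_zero_of_mem_QSet_interior hxd.1.1 hxd.2
  have hdir : ∀ w, psiH Ψ w = 0 → 0 ≤ ⟪g, w⟫ := fun w hw => by
    simpa using hg.neg_le_inner (c := 0) (by
      filter_upwards [eventually_add_smul_mem_of_mem_interior hxd.2 w]
        with ε hε
      simpa using hxd.1.2 _ ((mem_QSet_iff_of_psiH_eq_zero hxd.1.1.1 hpsi).2
        ⟨hε, by simp [psiH_add, psiH_smul, hpsi, hw]⟩))
  exact le_antisymm (by simpa using hdir (-v) (by simp [psiH_neg, hv])) (hdir v hv)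

lemma XuSet_inter_QSet_nonempty_iff (hL : ConvexOn ℝ Set.univ L)
    (hxd : xd ∈ XdSet C L Ψ ∩ interior C) (hg : HasGradientAt L g xd) (u : ℝ) :
    (XuSet C L Ψ u ∩ QSet C Ψ).Nonempty ↔ ∀ v, ⟪g, v⟫ ≤ u * cnorm1 (psiH Ψ v) := by
  have hpsi := psiH_eq_zero_of_mem_QSet_interior hxd.1.1 hxd.2
  have hQ : ∀ x, x ∈ QSet C Ψ ↔ x ∈ C ∧ psiH Ψ x = 0 := fun x =>
    mem_QSet_iff_of_psiH_eq_zero hxd.1.1.1 hpsi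
  constructor
  · rintro ⟨x, hxX, hxQ⟩ v
    have hle : ∀ χ ∈ C, L xd ≤ L χ + u * cnorm1 (psiH Ψ χ) := fun χ hχ => by
      have := hxX.2 χ hχ
      rw [((hQ x).1 hxQ).2, cnorm1_zero] at this
      linarith [hxd.1.2 x hxQ]
    have := hg.neg_le_inner (v := -v) (c := u * cnorm1 (psiH Ψ v)) (by
      filter_upwards [eventually_add_smul_mem_of_mem_interior hxd.2 (-v),
        self_mem_nhdsWithin] with ε hε hε0
      have := hle _ hε
      rwa [psiH_add, hpsi, zero_add, psiH_smul, cnorm1_smul, psiH_neg, cnorm1_neg,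
        abs_of_pos hε0, mul_left_comm] at this)
    rw [inner_neg_right] at this
    linarith
  · intro h
    refine ⟨xd, ⟨hxd.1.1.1, fun χ hχ => ?_⟩, hxd.1.1⟩
    have hconv := hL.add_inner_gradient_le hg χ
    have hdual := h (xd - χ)
    rw [psiH_sub, hpsi, zero_sub, cnorm1_neg] at hdual
    rw [← neg_sub, inner_neg_right] at hconv
    rw [hpsi, cnorm1_zero]
    linarith

end Optimality

lemma ENNReal.sInf_ofReal_eq_of_iff {ι : Type*} {P : ℝ → Prop} (f : ι → ℝ)
    (hf : ∀ t, 0 ≤ f t) (hP : ∀ u, 0 ≤ u → (P u ↔ ∃ t, f t ≤ u)) :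
    sInf (ENNReal.ofReal '' {u | 0 ≤ u ∧ P u}) = sInf (ENNReal.ofReal '' {r | ∃ t, r = f t}) := by
  apply le_antisymm
  · refine le_sInf ?_
    rintro _ ⟨_, ⟨t, rfl⟩, rfl⟩
    exact sInf_le ⟨f t, ⟨hf t, (hP _ (hf t)).2 ⟨t, le_rfl⟩⟩, rfl⟩
  · refine le_sInf ?_
    rintro _ ⟨u, ⟨hu, hPu⟩, rfl⟩
    obtain ⟨t, ht⟩ := (hP u hu).1 hPu
    exact sInf_le_of_le ⟨f t, ⟨t, rfl⟩, rfl⟩ (ENNReal.ofReal_le_ofReal ht)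

theorem statement_13_general {p p' d : ℕ}
    (C : Set (EuclideanSpace ℝ (Fin p)))
    (L : EuclideanSpace ℝ (Fin p) → ℝ) (hLcv : ConvexOn ℝ Set.univ L)
    (gradL : EuclideanSpace ℝ (Fin p) → EuclideanSpace ℝ (Fin p))
    (hLd : ∀ x, HasGradientAt L (gradL x) x)
    (Ψ : Matrix (Fin p) (Fin p') ℂ)
    (hint : (XdSet C L Ψ ∩ interior C).Nonempty)
    (F : Matrix (Fin p) (Fin d) ℝ) (Z : Matrix (Fin d) (Fin p') ℂ)
    (hfac : Ψ = F.map Complex.ofReal * Z)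
    (hF : F.rank = d)
    (hZ : (Matrix.fromCols (Z.map Complex.re) (Z.map Complex.im)).rank = d) :
    Ubound C L Ψ ≠ ⊤ ∧
    ∀ xd ∈ XdSet C L Ψ ∩ interior C,
      Ubound C L Ψ = sInf (ENNReal.ofReal '' {r : ℝ | ∃ t : Fin p' → ℂ,
        r = cnormInf (t + (Zddag Z).mulVec fun i =>
          (((Fpinv F).mulVec (fun j => gradL xd j) i - (Z.mulVec t i).re : ℝ) : ℂ))}) := by
  have hU : ∀ xd ∈ XdSet C L Ψ ∩ interior C, Ubound C L Ψ = sInf (ENNReal.ofReal ''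
      {r | ∃ t, r = cnormInf (reSolution Z (Fpinv F *ᵥ (gradL xd).ofLp) t)}) := by
    intro xd hxd
    refine ENNReal.sInf_ofReal_eq_of_iff _ (fun t => (cnormInf_eq_norm _).symm ▸ norm_nonneg _)
      fun u hu => ?_
    simp only [cnormInf_eq_norm]
    rw [XuSet_inter_QSet_nonempty_iff hLcv hxd (hLd xd), ← exists_rePsi_eq_norm_le_iff Ψ hu,
      exists_rePsi_eq_iff_exists_reSolution hfac hF hZ
        fun v => inner_gradient_eq_zero_of_psiH_eq_zero hxd (hLd xd)]
  obtain ⟨xd, hxd⟩ := hint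
  refine ⟨?_, hU⟩
  rw [hU xd hxd]
  exact ne_top_of_le_ne_top ENNReal.ofReal_ne_top (sInf_le ⟨_, ⟨0, rfl⟩, rfl⟩)

theorem statement_13 {p p' d : ℕ} (hp : 0 < p) (hp' : 0 < p') (hd : 0 < d)
    (C : Set (EuclideanSpace ℝ (Fin p))) (hCne : C.Nonempty) (hCcl : IsClosed C)
    (hCcv : Convex ℝ C)
    (L : EuclideanSpace ℝ (Fin p) → ℝ) (hLcv : ConvexOn ℝ Set.univ L)
    (gradL : EuclideanSpace ℝ (Fin p) → EuclideanSpace ℝ (Fin p))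
    (hLd : ∀ x, HasGradientAt L (gradL x) x)
    (hLb : BddBelow (L '' C))
    (Ψ : Matrix (Fin p) (Fin p') ℂ)
    (hint : (XdSet C L Ψ ∩ interior C).Nonempty)
    (hdim : Module.finrank ℝ
      (Submodule.span ℝ {v : EuclideanSpace ℝ (Fin p) | ∃ w : Fin p' → ℂ, rePsi Ψ w = v}) = d)
    (F : Matrix (Fin p) (Fin d) ℝ) (Z : Matrix (Fin d) (Fin p') ℂ)
    (hfac : Ψ = F.map Complex.ofReal * Z)
    (hF : F.rank = d)
    (hZ : (Matrix.fromCols (Z.map Complex.re) (Z.map Complex.im)).rank = d) :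
    Ubound C L Ψ ≠ ⊤ ∧
    ∀ xd ∈ XdSet C L Ψ ∩ interior C,
      Ubound C L Ψ = sInf (ENNReal.ofReal '' {r : ℝ | ∃ t : Fin p' → ℂ,
        r = cnormInf (t + (Zddag Z).mulVec fun i =>
          (((Fpinv F).mulVec (fun j => gradL xd j) i - (Z.mulVec t i).re : ℝ) : ℂ))}) :=
  statement_13_general C L hLcv gradL hLd Ψ hint F Z hfac hF hZ
end
end

section
/- (Example: real invertible dictionary, 0 in the interior) Let Ψ be a real invertible p × p matrix and let C ⊆ ℝ^p be a nonempty closed convex set with 0 ∈ int C. Then X⋄ = Q = {0} and U = ‖Ψ⁻¹ ∇L(0)‖_∞. -/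
open Matrix
open scoped RealInnerProductSpace ENNReal

noncomputable section

def rnorm1 {n : ℕ} (z : Fin n → ℝ) : ℝ := ∑ j, |z j|

noncomputable def rnormInf {n : ℕ} (z : Fin n → ℝ) : ℝ := ⨆ j, |z j|

/-- `Ψᵀ x` for a real dictionary `Ψ`. -/
def psiT {p q : ℕ} (Ψ : Matrix (Fin p) (Fin q) ℝ) (x : EuclideanSpace ℝ (Fin p)) :
    Fin q → ℝ :=
  Matrix.mulVec Ψᵀ fun i => x i

def XuSetR {p q : ℕ} (C : Set (EuclideanSpace ℝ (Fin p))) (L : EuclideanSpace ℝ (Fin p) → ℝ)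
    (Ψ : Matrix (Fin p) (Fin q) ℝ) (u : ℝ) : Set (EuclideanSpace ℝ (Fin p)) :=
  {x ∈ C | ∀ χ ∈ C, L x + u * rnorm1 (psiT Ψ x) ≤ L χ + u * rnorm1 (psiT Ψ χ)}

def QSetR {p q : ℕ} (C : Set (EuclideanSpace ℝ (Fin p))) (Ψ : Matrix (Fin p) (Fin q) ℝ) :
    Set (EuclideanSpace ℝ (Fin p)) :=
  {x ∈ C | ∀ χ ∈ C, rnorm1 (psiT Ψ x) ≤ rnorm1 (psiT Ψ χ)}

def XdSetR {p q : ℕ} (C : Set (EuclideanSpace ℝ (Fin p))) (L : EuclideanSpace ℝ (Fin p) → ℝ)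
    (Ψ : Matrix (Fin p) (Fin q) ℝ) : Set (EuclideanSpace ℝ (Fin p)) :=
  {x ∈ QSetR C Ψ | ∀ χ ∈ QSetR C Ψ, L x ≤ L χ}

def UboundR {p q : ℕ} (C : Set (EuclideanSpace ℝ (Fin p))) (L : EuclideanSpace ℝ (Fin p) → ℝ)
    (Ψ : Matrix (Fin p) (Fin q) ℝ) : ℝ≥0∞ :=
  sInf (ENNReal.ofReal '' {u : ℝ | 0 ≤ u ∧ (XuSetR C L Ψ u ∩ QSetR C Ψ).Nonempty})

/-!
Since `Ψᵀ` is injective and `0 ∈ C`, the ℓ¹-penalty `‖Ψᵀ x‖₁` is minimised on `C` exactly at `0`,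
so `Q = X⋄ = {0}` and `U` is the least `u ≥ 0` for which `0` minimises `L + u‖Ψᵀ ·‖₁` on `C`.
Writing `⟪∇L(0), χ⟫ = (Ψ⁻¹ ∇L(0)) ⬝ (Ψᵀ χ)`, the gradient inequality and Hölder's inequality show
that `u ≥ ‖Ψ⁻¹ ∇L(0)‖∞` suffices. Conversely, as `0` is interior, the first-order condition
`0 ≤ ⟪∇L(0), d⟫ + u‖Ψᵀ d‖₁` holds in every direction `d`; choosing `Ψᵀ d` along a coordinate
gives `|(Ψ⁻¹ ∇L(0))ⱼ| ≤ u` for each `j`.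
-/

open Set Filter Topology

section FirstOrder

variable {E : Type*} [NormedAddCommGroup E] [InnerProductSpace ℝ E] [CompleteSpace E]

theorem ConvexOn.add_inner_le_of_hasGradientAt {f : E → ℝ} {g x : E}
    (hf : ConvexOn ℝ univ f) (hg : HasGradientAt f g x) (y : E) :
    f x + ⟪g, y - x⟫ ≤ f y := by
  have hφ : ConvexOn ℝ univ (f ∘ AffineMap.lineMap (k := ℝ) x y) := by
    simpa using hf.comp_affineMap (AffineMap.lineMap (k := ℝ) x y)
  have hφ' : HasDerivAt (f ∘ AffineMap.lineMap (k := ℝ) x y) ⟪g, y - x⟫ 0 := by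
    have hfx :
        HasFDerivAt f (InnerProductSpace.toDual ℝ E g) (AffineMap.lineMap (k := ℝ) x y 0) := by
      simpa using hg.hasFDerivAt
    exact hfx.comp_hasDerivAt 0 AffineMap.hasDerivAt_lineMap
  have := hφ.le_slope_of_hasDerivAt (mem_univ 0) (mem_univ 1) one_pos hφ'
  simp [slope] at this
  linarith

theorem inner_gradient_add_nonneg_of_forall_le {C : Set E} {f N : E → ℝ} {g : E}
    (hC : 0 ∈ interior C) (hg : HasGradientAt f g 0)
    (hN : ∀ t : ℝ, 0 < t → ∀ d, N (t • d) = t * N d)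
    (hmin : ∀ χ ∈ C, f 0 ≤ f χ + N χ) (d : E) :
    0 ≤ ⟪g, d⟫ + N d := by
  have hφ : HasDerivAt (fun t : ℝ => f (t • d)) ⟪g, d⟫ 0 := by
    have hf0 : HasFDerivAt f (InnerProductSpace.toDual ℝ E g) ((0 : ℝ) • d) := by
      simpa using hg.hasFDerivAt
    have hline : HasDerivAt (fun t : ℝ => t • d) d 0 := by
      simpa using (hasDerivAt_id (0 : ℝ)).smul_const d
    exact hf0.comp_hasDerivAt 0 hline
  have hsmul : Tendsto (fun t : ℝ => t • d) (𝓝[>] 0) (𝓝 0) := by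
    have : Continuous fun t : ℝ => t • d := continuous_id.smul continuous_const
    exact (this.tendsto' 0 0 (zero_smul ℝ d)).mono_left nhdsWithin_le_nhds
  have hslope : ∀ᶠ t in 𝓝[>] (0 : ℝ), -N d ≤ t⁻¹ • (f ((0 + t) • d) - f ((0 : ℝ) • d)) := by
    filter_upwards [hsmul (mem_interior_iff_mem_nhds.1 hC), self_mem_nhdsWithin]
      with t (htC : t • d ∈ C) (ht : 0 < t)
    have := hmin _ htC
    rw [hN t ht] at this
    rw [zero_add, zero_smul, smul_eq_mul, le_inv_mul_iff₀ ht]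
    linarith
  have := ge_of_tendsto hφ.tendsto_slope_zero_right hslope
  linarith

end FirstOrder

section Norms

variable {n : ℕ}

lemma rnorm1_nonneg (z : Fin n → ℝ) : 0 ≤ rnorm1 z :=
  Finset.sum_nonneg fun j _ => abs_nonneg (z j)

@[simp]
lemma rnorm1_zero : rnorm1 (0 : Fin n → ℝ) = 0 := by
  simp [rnorm1]

lemma rnorm1_eq_zero_iff {z : Fin n → ℝ} : rnorm1 z = 0 ↔ z = 0 := by
  simp [rnorm1, Finset.sum_eq_zero_iff_of_nonneg, funext_iff]

lemma rnorm1_smul (t : ℝ) (z : Fin n → ℝ) : rnorm1 (t • z) = |t| * rnorm1 z := by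
  simp [rnorm1, abs_mul, Finset.mul_sum]

lemma rnorm1_single (j : Fin n) (c : ℝ) : rnorm1 (Pi.single j c) = |c| := by
  simp [rnorm1, Pi.single_apply, apply_ite]

lemma abs_le_rnormInf (v : Fin n → ℝ) (j : Fin n) : |v j| ≤ rnormInf v :=
  le_ciSup (f := fun j => |v j|) (finite_range _).bddAbove j

lemma rnormInf_nonneg (v : Fin n → ℝ) : 0 ≤ rnormInf v :=
  Real.iSup_nonneg fun j => abs_nonneg (v j)

lemma abs_dotProduct_le_rnormInf_mul_rnorm1 (v w : Fin n → ℝ) :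
    |v ⬝ᵥ w| ≤ rnormInf v * rnorm1 w :=
  calc |v ⬝ᵥ w| ≤ ∑ j, |v j * w j| := Finset.abs_sum_le_sum_abs _ _
    _ ≤ ∑ j, rnormInf v * |w j| := Finset.sum_le_sum fun j _ => by
        rw [abs_mul]; exact mul_le_mul_of_nonneg_right (abs_le_rnormInf v j) (abs_nonneg _)
    _ = rnormInf v * rnorm1 w := by rw [rnorm1, Finset.mul_sum]

lemma rnormInf_le_iff_forall_dotProduct {v : Fin n → ℝ} {u : ℝ} (hu : 0 ≤ u) :
    rnormInf v ≤ u ↔ ∀ z, -(u * rnorm1 z) ≤ v ⬝ᵥ z := by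
  constructor
  · intro hv z
    have := abs_dotProduct_le_rnormInf_mul_rnorm1 v z
    nlinarith [abs_le.1 this, rnorm1_nonneg z]
  · intro h
    refine Real.iSup_le (fun j => ?_) hu
    have := h (Pi.single j (-v j))
    rw [rnorm1_single, dotProduct_single, abs_neg, mul_neg, ← abs_mul_abs_self] at this
    nlinarith [abs_nonneg (v j)]

end Norms

section Dictionary

variable {p : ℕ} (Ψ : Matrix (Fin p) (Fin p) ℝ)

lemma psiT_zero : psiT Ψ 0 = 0 :=
  Matrix.mulVec_zero _

lemma psiT_smul (t : ℝ) (x : EuclideanSpace ℝ (Fin p)) : psiT Ψ (t • x) = t • psiT Ψ x :=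
  Matrix.mulVec_smul _ t _

lemma psiT_bijective (hΨ : IsUnit Ψ.det) : Function.Bijective (psiT Ψ) := by
  have hΨT : IsUnit Ψᵀ := by rwa [Matrix.isUnit_transpose, Matrix.isUnit_iff_isUnit_det]
  exact Function.Bijective.comp
    ⟨Matrix.mulVec_injective_iff_isUnit.2 hΨT, Matrix.mulVec_surjective_iff_isUnit.2 hΨT⟩
    (WithLp.linearEquiv 2 ℝ _).bijective

lemma inner_eq_dotProduct_psiT (hΨ : IsUnit Ψ.det) (g x : EuclideanSpace ℝ (Fin p)) :
    ⟪g, x⟫ = (Ψ⁻¹ *ᵥ fun i => g i) ⬝ᵥ psiT Ψ x := by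
  rw [psiT, Matrix.dotProduct_mulVec, Matrix.vecMul_transpose, Matrix.mulVec_mulVec,
    Matrix.mul_nonsing_inv _ hΨ, Matrix.one_mulVec]
  simp [PiLp.inner_apply, dotProduct, mul_comm]

end Dictionary

section Minimizers

variable {p : ℕ} {C : Set (EuclideanSpace ℝ (Fin p))} {Ψ : Matrix (Fin p) (Fin p) ℝ}

lemma QSetR_eq_singleton_zero (h0 : 0 ∈ C) (hΨ : IsUnit Ψ.det) : QSetR C Ψ = {0} := by
  ext x
  refine ⟨fun ⟨_, hx⟩ => ?_, ?_⟩
  · have hx0 : rnorm1 (psiT Ψ x) = 0 :=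
      le_antisymm (by simpa [psiT_zero] using hx 0 h0) (rnorm1_nonneg _)
    rw [rnorm1_eq_zero_iff, ← psiT_zero Ψ] at hx0
    exact (psiT_bijective Ψ hΨ).1 hx0
  · rintro rfl
    exact ⟨h0, fun χ _ => by simpa [psiT_zero] using rnorm1_nonneg (psiT Ψ χ)⟩

lemma XdSetR_eq_of_QSetR_eq_singleton {L : EuclideanSpace ℝ (Fin p) → ℝ}
    {a : EuclideanSpace ℝ (Fin p)} (hQ : QSetR C Ψ = {a}) : XdSetR C L Ψ = {a} := by
  ext x
  simp only [XdSetR, hQ, mem_singleton_iff, mem_ofPred_eq, forall_eq]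
  exact ⟨And.left, fun hx => ⟨hx, hx ▸ le_rfl⟩⟩

lemma zero_mem_XuSetR_iff {L : EuclideanSpace ℝ (Fin p) → ℝ} {g : EuclideanSpace ℝ (Fin p)}
    {u : ℝ} (h0 : 0 ∈ interior C) (hΨ : IsUnit Ψ.det) (hL : ConvexOn ℝ univ L)
    (hg : HasGradientAt L g 0) (hu : 0 ≤ u) :
    0 ∈ XuSetR C L Ψ u ↔ rnormInf (Ψ⁻¹ *ᵥ fun i => g i) ≤ u := by
  simp only [XuSetR, mem_ofPred_eq, psiT_zero, rnorm1_zero, mul_zero, add_zero]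
  rw [rnormInf_le_iff_forall_dotProduct hu]
  constructor
  · rintro ⟨-, hmin⟩ z
    obtain ⟨d, rfl⟩ := (psiT_bijective Ψ hΨ).2 z
    have hN (t : ℝ) (ht : 0 < t) (x : EuclideanSpace ℝ (Fin p)) :
        u * rnorm1 (psiT Ψ (t • x)) = t * (u * rnorm1 (psiT Ψ x)) := by
      rw [psiT_smul, rnorm1_smul, abs_of_pos ht]; ring
    have := inner_gradient_add_nonneg_of_forall_le h0 hg hN hmin d
    rw [inner_eq_dotProduct_psiT Ψ hΨ] at this
    linarith
  · refine fun hw => ⟨interior_subset h0, fun χ _ => ?_⟩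
    have := hL.add_inner_le_of_hasGradientAt hg χ
    rw [sub_zero, inner_eq_dotProduct_psiT Ψ hΨ] at this
    linarith [hw (psiT Ψ χ)]

end Minimizers

theorem statement_15_general {p : ℕ}
    (C : Set (EuclideanSpace ℝ (Fin p)))
    (h0 : (0 : EuclideanSpace ℝ (Fin p)) ∈ interior C)
    (Ψ : Matrix (Fin p) (Fin p) ℝ) (hΨ : IsUnit Ψ.det)
    (L : EuclideanSpace ℝ (Fin p) → ℝ) (hLcv : ConvexOn ℝ Set.univ L)
    (gradL : EuclideanSpace ℝ (Fin p) → EuclideanSpace ℝ (Fin p))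
    (hLd : ∀ x, HasGradientAt L (gradL x) x) :
    QSetR C Ψ = {0} ∧
    XdSetR C L Ψ = {0} ∧
    UboundR C L Ψ = ENNReal.ofReal (rnormInf (Ψ⁻¹.mulVec fun i => gradL 0 i)) := by
  have hQ := QSetR_eq_singleton_zero (interior_subset h0) hΨ
  refine ⟨hQ, XdSetR_eq_of_QSetR_eq_singleton hQ, ?_⟩
  have hS : {u : ℝ | 0 ≤ u ∧ (XuSetR C L Ψ u ∩ QSetR C Ψ).Nonempty} =
      Ici (rnormInf (Ψ⁻¹.mulVec fun i => gradL 0 i)) := by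
    ext u
    simp only [hQ, inter_singleton_nonempty, mem_ofPred_eq, mem_Ici]
    exact ⟨fun ⟨hu, h⟩ => (zero_mem_XuSetR_iff h0 hΨ hLcv (hLd 0) hu).1 h,
      fun h => have hu := (rnormInf_nonneg _).trans h
        ⟨hu, (zero_mem_XuSetR_iff h0 hΨ hLcv (hLd 0) hu).2 h⟩⟩
  rw [UboundR, hS]
  exact (ENNReal.ofReal_mono.map_isLeast isLeast_Ici).isGLB.sInf_eq

theorem statement_15 {p : ℕ} (hp : 0 < p)
    (C : Set (EuclideanSpace ℝ (Fin p))) (hCne : C.Nonempty) (hCcl : IsClosed C)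
    (hCcv : Convex ℝ C) (h0 : (0 : EuclideanSpace ℝ (Fin p)) ∈ interior C)
    (Ψ : Matrix (Fin p) (Fin p) ℝ) (hΨ : IsUnit Ψ.det)
    (L : EuclideanSpace ℝ (Fin p) → ℝ) (hLcv : ConvexOn ℝ Set.univ L)
    (gradL : EuclideanSpace ℝ (Fin p) → EuclideanSpace ℝ (Fin p))
    (hLd : ∀ x, HasGradientAt L (gradL x) x)
    (hLb : BddBelow (L '' C)) :
    QSetR C Ψ = {0} ∧
    XdSetR C L Ψ = {0} ∧
    UboundR C L Ψ = ENNReal.ofReal (rnormInf (Ψ⁻¹.mulVec fun i => gradL 0 i)) :=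
  statement_15_general C h0 Ψ hΨ L hLcv gradL hLd
end
end
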